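/- In the hard instance for the adaptive lower bound, regardless of the algorithm's actions, the best expert in hindsight has expected average loss at most ε²/20; that is, E[min_{i∈[n]} (1/T)·Σ_{t=1}^T ℓ_t(i)] ≤ ε²/20. -/

import Mathlib

/-!
Statement 18: In the hard instance for the adaptive lower bound, regardless of the
algorithm's actions, the best expert in hindsight has expected average loss at most
`ε²/20`, i.e. `E[min_i (1/T)·Σ_t ℓ_t(i)] ≤ ε²/20`.

Setup: `M = ε√n`, `N = √n/ε`, `n = N·M` experts indexed by `Fin N × Fin M` (block,
coordinate).  The instance `(x_A, x_B)` has, in each block, exactly one intersecting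
coordinate `(1,1)` and exactly `(M−1)/3` coordinates of each of `(0,0)`, `(1,0)`,
`(0,1)`.  Days are grouped into epochs of `N/10` days.  Each day, with probability
`1−ε²` the loss vector is `0`; with probability `ε²` every expert in a block already
played during the current epoch gets loss `1/2`, and every other block `α` gets loss
vector `1 − x_{A,α}` or `1 − x_{B,α}` with probability `1/2` each.  The daily
randomness is a pair of uniform `[0,1]` seeds.
-/

open MeasureTheory
open scoped Classical

/-- The product of uniform `[0,1]` distributions: the law of the daily coins. -/
noncomputable def unifSeeds (ι : Type) [Fintype ι] : Measure (ι → ℝ) :=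
  Measure.pi fun _ => (volume : Measure ℝ).restrict (Set.Icc 0 1)

/-- A valid hard instance: in each block, exactly one intersecting `(1,1)` coordinate
and exactly `(M−1)/3` coordinates of each of `(0,0)`, `(1,0)`, `(0,1)`. -/
def ValidInstance {N M : ℕ} (xA xB : Fin N → Fin M → Bool) : Prop :=
  ∃ m : ℕ, M = 3 * m + 1 ∧ ∀ α : Fin N,
    (Finset.univ.filter fun i => xA α i = true ∧ xB α i = true).card = 1 ∧
    (Finset.univ.filter fun i => xA α i = true ∧ xB α i = false).card = m ∧
    (Finset.univ.filter fun i => xA α i = false ∧ xB α i = true).card = m ∧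
    (Finset.univ.filter fun i => xA α i = false ∧ xB α i = false).card = m

/-- Whether block `α` has been played by the algorithm earlier in the current epoch
(epochs have `E` days). -/
def playedBefore {N M T : ℕ} (E : ℕ) (act : ℕ → (Fin T × Bool → ℝ) → Fin N × Fin M)
    (ω : Fin T × Bool → ℝ) (α : Fin N) (t : ℕ) : Prop :=
  ∃ t' < t, t' / E = t / E ∧ (act t' ω).1 = α

/-- The adaptive loss of the hard instance on day `t`, as a function of the daily
coins `ω` and the algorithm's actions. -/
noncomputable def hardLoss {N M T : ℕ} (E : ℕ) (ε : ℝ)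
    (xA xB : Fin N → Fin M → Bool)
    (act : ℕ → (Fin T × Bool → ℝ) → Fin N × Fin M)
    (ω : Fin T × Bool → ℝ) (t : ℕ) (p : Fin N × Fin M) : ℝ :=
  if h : t < T then
    if ω (⟨t, h⟩, false) ≤ ε ^ 2 then
      if playedBefore E act ω p.1 t then 1 / 2
      else if ω (⟨t, h⟩, true) ≤ 1 / 2 then (if xA p.1 p.2 then 0 else 1)
      else (if xB p.1 p.2 then 0 else 1)
    else 0
  else 0


section Aux
open MeasureTheory

lemma hardLoss_nonneg {N M T : ℕ} (E : ℕ) (ε : ℝ) (xA xB : Fin N → Fin M → Bool)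
    (act : ℕ → (Fin T × Bool → ℝ) → Fin N × Fin M) (ω : Fin T × Bool → ℝ) (t : ℕ)
    (p : Fin N × Fin M) : 0 ≤ hardLoss E ε xA xB act ω t p := by
  unfold hardLoss; split_ifs <;> norm_num

instance instProbUnif (ι : Type) [Fintype ι] : IsProbabilityMeasure (unifSeeds ι) := by
  haveI : IsProbabilityMeasure ((volume : Measure ℝ).restrict (Set.Icc 0 1)) := by
    constructor; simp [Real.volume_Icc]
  unfold unifSeeds; infer_instance

lemma unifSeeds_le {ι : Type} [Fintype ι] (c : ι) (a : ℝ) :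
    unifSeeds ι {ω | ω c ≤ a} ≤ ENNReal.ofReal a := by
  haveI : IsProbabilityMeasure ((volume : Measure ℝ).restrict (Set.Icc 0 1)) := by
    constructor; simp [Real.volume_Icc]
  have hset : {ω : ι → ℝ | ω c ≤ a}
      = Set.univ.pi (fun i => if i = c then Set.Iic a else Set.univ) := by
    ext ω
    simp only [Set.mem_setOf_eq, Set.mem_pi, Set.mem_univ, true_implies]
    constructor
    · intro h i
      by_cases hi : i = c
      · subst hi; simpa using h
      · simp [hi]
    · intro h; simpa using h c
  rw [unifSeeds, hset, Measure.pi_pi]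
  have hprod : ∀ i : ι, ((volume : Measure ℝ).restrict (Set.Icc 0 1))
      (if i = c then Set.Iic a else Set.univ)
      = if i = c then ((volume : Measure ℝ).restrict (Set.Icc 0 1)) (Set.Iic a) else 1 := by
    intro i; split <;> simp
  simp_rw [hprod]
  rw [Finset.prod_ite_eq']
  simp only [Finset.mem_univ, if_true]
  rw [Measure.restrict_apply measurableSet_Iic]
  calc volume (Set.Iic a ∩ Set.Icc 0 1) ≤ volume (Set.Icc 0 a) := by
        apply measure_mono; rintro x ⟨h1, h2, h3⟩; exact ⟨h2, h1⟩
    _ = ENNReal.ofReal a := by rw [Real.volume_Icc]; simp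

end Aux

theorem statement18 (N M E numEp T : ℕ) (ε : ℝ)
    (hM : 0 < M) (hN : 0 < N)
    -- `M = ε√n` and `N = √n/ε`, where `n = N·M`
    (hMε : (M : ℝ) = ε * Real.sqrt ((N : ℝ) * M))
    (hNε : (N : ℝ) = Real.sqrt ((N : ℝ) * M) / ε)
    -- epochs have `N/10` days, and `T` consists of whole epochs
    (hE : N = 10 * E) (hT : T = numEp * E)
    (xA xB : Fin N → Fin M → Bool) (hx : ValidInstance xA xB)
    -- arbitrary (measurable) behaviour of the algorithm
    (act : ℕ → (Fin T × Bool → ℝ) → Fin N × Fin M)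
    (hact : ∀ t, Measurable (act t)) :
    (∫ ω, (⨅ p : Fin N × Fin M,
        ∑ t ∈ Finset.range T, hardLoss E ε xA xB act ω t p)
      ∂(unifSeeds (Fin T × Bool))) ≤ ε ^ 2 / 20 * T := by
  classical
  have hE0 : 0 < E := by omega
  have hN' : (0:ℝ) < N := by exact_mod_cast hN
  have hNE : (N:ℝ) = 10 * E := by exact_mod_cast hE
  obtain ⟨m, hm, hblocks⟩ := hx
  have hiStar : ∀ α : Fin N, ∃ i : Fin M, xA α i = true ∧ xB α i = true := by
    intro α
    have h1 := (hblocks α).1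
    have hne : (Finset.univ.filter fun i => xA α i = true ∧ xB α i = true).Nonempty := by
      rw [← Finset.card_pos, h1]; norm_num
    obtain ⟨i, hi⟩ := hne
    exact ⟨i, (Finset.mem_filter.mp hi).2⟩
  choose iStar hiA hiB using hiStar
  set μ := unifSeeds (Fin T × Bool) with hμ
  haveI : IsProbabilityMeasure μ := instProbUnif _
  set g : (Fin T × Bool → ℝ) → ℝ := fun ω => ∑ t ∈ Finset.range T,
    (if h : t < T then Set.indicator {ω' : Fin T × Bool → ℝ | ω' (⟨t, h⟩, false) ≤ ε ^ 2}
      (fun _ => (1:ℝ)/20) ω else 0) with hg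
  have hsmeas : ∀ (c : Fin T × Bool), MeasurableSet {ω' : Fin T × Bool → ℝ | ω' c ≤ ε ^ 2} :=
    fun c => measurableSet_le (measurable_pi_apply c) measurable_const
  have hint : ∀ t ∈ Finset.range T, Integrable (fun ω : Fin T × Bool → ℝ =>
      (if h : t < T then Set.indicator {ω' : Fin T × Bool → ℝ | ω' (⟨t, h⟩, false) ≤ ε ^ 2}
        (fun _ => (1:ℝ)/20) ω else 0)) μ := by
    intro t ht
    by_cases h : t < T
    · simp only [dif_pos h]
      exact (integrable_const ((1:ℝ)/20)).indicator (hsmeas _)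
    · simp only [dif_neg h]; exact integrable_const 0
  have hgint : Integrable g μ := by
    rw [hg]; exact integrable_finset_sum _ hint
  have hf0 : ∀ ω : Fin T × Bool → ℝ,
      0 ≤ ⨅ p : Fin N × Fin M, ∑ t ∈ Finset.range T, hardLoss E ε xA xB act ω t p := by
    intro ω
    haveI : Nonempty (Fin N × Fin M) := ⟨⟨⟨0, hN⟩, ⟨0, hM⟩⟩⟩
    exact le_ciInf fun p => Finset.sum_nonneg fun t _ => hardLoss_nonneg E ε xA xB act ω t p
  have hpt : ∀ ω : Fin T × Bool → ℝ,
      (⨅ p : Fin N × Fin M, ∑ t ∈ Finset.range T, hardLoss E ε xA xB act ω t p) ≤ g ω := by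
    intro ω
    set S : Fin N × Fin M → ℝ := fun p => ∑ t ∈ Finset.range T, hardLoss E ε xA xB act ω t p
      with hS
    have hbdd : BddBelow (Set.range S) := Finite.bddBelow_range S
    have key : (N:ℝ) * (⨅ p, S p) ≤ (N:ℝ) * g ω := by
      calc (N:ℝ) * (⨅ p, S p) = ∑ _α : Fin N, (⨅ p, S p) := by
            rw [Finset.sum_const, Finset.card_univ, Fintype.card_fin, nsmul_eq_mul]
        _ ≤ ∑ α : Fin N, S (α, iStar α) := Finset.sum_le_sum fun α _ => ciInf_le hbdd _
        _ = ∑ t ∈ Finset.range T, ∑ α : Fin N, hardLoss E ε xA xB act ω t (α, iStar α) :=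
            Finset.sum_comm
        _ ≤ (N:ℝ) * g ω := ?_
      rw [hg, Finset.mul_sum]
      apply Finset.sum_le_sum
      intro t ht
      have h : t < T := Finset.mem_range.mp ht
      rw [dif_pos h]
      by_cases hc : ω (⟨t, h⟩, false) ≤ ε ^ 2
      · have hterm : ∀ α : Fin N, hardLoss E ε xA xB act ω t (α, iStar α)
            = if playedBefore E act ω α t then 1/2 else 0 := by
          intro α
          simp only [hardLoss, dif_pos h, if_pos hc, hiA, hiB, ite_true]
          split
          · rfl
          · simp
        have hcard : (Finset.univ.filter fun α : Fin N => playedBefore E act ω α t).card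
            ≤ E := by
          have hsub : (Finset.univ.filter fun α : Fin N => playedBefore E act ω α t)
              ⊆ (Finset.Ico (t / E * E) t).image (fun t' => (act t' ω).1) := by
            intro α hα
            obtain ⟨t', ht', heq, hαeq⟩ := (Finset.mem_filter.mp hα).2
            refine Finset.mem_image.mpr ⟨t', Finset.mem_Ico.mpr ⟨?_, ht'⟩, hαeq⟩
            calc t / E * E = t' / E * E := by rw [heq]
              _ ≤ t' := Nat.div_mul_le_self _ _
          calc _ ≤ ((Finset.Ico (t / E * E) t).image (fun t' => (act t' ω).1)).card :=
                Finset.card_le_card hsub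
            _ ≤ (Finset.Ico (t / E * E) t).card := Finset.card_image_le
            _ = t - t / E * E := Nat.card_Ico _ _
            _ ≤ E := by
                have h1 : t < t / E * E + E := Nat.lt_div_mul_add hE0
                omega
        simp_rw [hterm]
        rw [Finset.sum_ite, Finset.sum_const, Finset.sum_const_zero, add_zero, nsmul_eq_mul]
        have hind : Set.indicator {ω' : Fin T × Bool → ℝ | ω' (⟨t, h⟩, false) ≤ ε ^ 2}
            (fun _ => (1:ℝ)/20) ω = 1/20 :=
          Set.indicator_of_mem
            (show ω ∈ {ω' : Fin T × Bool → ℝ | ω' (⟨t, h⟩, false) ≤ ε ^ 2} from hc) _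
        rw [hind]
        have hcard' : ((Finset.univ.filter
            fun α : Fin N => playedBefore E act ω α t).card : ℝ) ≤ E := by
          exact_mod_cast hcard
        linarith
      · have hterm : ∀ α : Fin N, hardLoss E ε xA xB act ω t (α, iStar α) = 0 := by
          intro α; simp only [hardLoss, dif_pos h, if_neg hc]
        simp_rw [hterm]
        have hind : Set.indicator {ω' : Fin T × Bool → ℝ | ω' (⟨t, h⟩, false) ≤ ε ^ 2}
            (fun _ => (1:ℝ)/20) ω = 0 :=
          Set.indicator_of_notMem
            (show ω ∉ {ω' : Fin T × Bool → ℝ | ω' (⟨t, h⟩, false) ≤ ε ^ 2} from hc) _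
        rw [hind, Finset.sum_const_zero, mul_zero]
    exact (mul_le_mul_iff_right₀ hN').mp key
  calc (∫ ω, (⨅ p : Fin N × Fin M,
        ∑ t ∈ Finset.range T, hardLoss E ε xA xB act ω t p) ∂μ)
      ≤ ∫ ω, g ω ∂μ :=
        integral_mono_of_nonneg (Filter.Eventually.of_forall hf0) hgint
          (Filter.Eventually.of_forall hpt)
    _ ≤ ε ^ 2 / 20 * T := ?_
  rw [hg, integral_finset_sum _ hint]
  have hterm_le : ∀ t ∈ Finset.range T, (∫ ω,
      (if h : t < T then Set.indicator {ω' : Fin T × Bool → ℝ | ω' (⟨t, h⟩, false) ≤ ε ^ 2}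
        (fun _ => (1:ℝ)/20) ω else 0) ∂μ) ≤ ε ^ 2 / 20 := by
    intro t ht
    have h : t < T := Finset.mem_range.mp ht
    simp only [dif_pos h]
    rw [integral_indicator_const _ (hsmeas _)]
    have hle := unifSeeds_le ((⟨t, h⟩ : Fin T), false) (ε ^ 2)
    have htr : (μ {ω' : Fin T × Bool → ℝ | ω' (⟨t, h⟩, false) ≤ ε ^ 2}).toReal ≤ ε ^ 2 := by
      have := ENNReal.toReal_mono (by simp) hle
      rwa [ENNReal.toReal_ofReal (sq_nonneg ε)] at this
    rw [smul_eq_mul, measureReal_def]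
    nlinarith [ENNReal.toReal_nonneg
      (a := μ {ω' : Fin T × Bool → ℝ | ω' (⟨t, h⟩, false) ≤ ε ^ 2})]
  calc (∑ t ∈ Finset.range T, ∫ ω,
        (if h : t < T then Set.indicator {ω' : Fin T × Bool → ℝ | ω' (⟨t, h⟩, false) ≤ ε ^ 2}
          (fun _ => (1:ℝ)/20) ω else 0) ∂μ)
      ≤ ∑ _t ∈ Finset.range T, ε ^ 2 / 20 := Finset.sum_le_sum hterm_le
    _ = ε ^ 2 / 20 * T := by
        rw [Finset.sum_const, Finset.card_range, nsmul_eq_mul]; ring
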